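/- arXiv:2202.10751 — 2 statements merged into one kernel-verified Lean document; each statement's English description precedes it below -/
import Mathlib

section
/- Suppose (Λ_n) satisfies Condition (D^Λ) with sets D_1,…,D_q and weights (λ_i). Then: (a) for every pair i ≠ j there exists p ∈ ℕ such that D_j ∩ K_p ≠ D_i ∩ K_p; and (b) for every j ≤ q and every p ∈ ℕ one has λ_{j,p} = Σ_{i ∈ I_p^{(j)}} λ_i, where I_p^{(j)} := {i ∈ {1,…,q} : D_i ∩ K_p = D_j ∩ K_p}. -/
open scoped Classical Pointwise
open Filter Set

namespace Paper

/-- The index space `ℤ^k`. -/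
abbrev V (k : ℕ) := Fin k → ℤ

variable {k : ℕ}

/-- Translate of a set: `(A)_t = {a + t : a ∈ A}`. -/
def tr (A : Set (V k)) (t : V k) : Set (V k) := (fun a => a + t) '' A

/-- Positive part of a set with respect to the order `prec`: `A⁺ = {a ∈ A : 0 ≺ a}`. -/
def posPart (prec : V k → V k → Prop) (A : Set (V k)) : Set (V k) := {a ∈ A | prec 0 a}

/-- The hypercube `K_c = ([-c,c] ∩ ℤ)^k`. -/
def Kc (k c : ℕ) : Set (V k) := {t : V k | ∀ i, |t i| ≤ (c : ℤ)}

/-- `Λ^{(t,c)} = ((Λ)_{-t} ∩ K_c)⁺`. -/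
def window (prec : V k → V k → Prop) (Λ : Set (V k)) (t : V k) (c : ℕ) : Set (V k) :=
  posPart prec (tr Λ (-t) ∩ Kc k c)

/-- A translation-invariant total (strict) order on `ℤ^k`. -/
structure IsTransOrder (prec : V k → V k → Prop) : Prop where
  trans : ∀ {a b c : V k}, prec a b → prec b c → prec a c
  irrefl : ∀ a : V k, ¬ prec a a
  total : ∀ a b : V k, a ≠ b → prec a b ∨ prec b a
  invariant : ∀ a b i : V k, prec a b → prec (a + i) (b + i)

/-- Condition `(D^Λ)`: the index sets `Λ_n`, the asymptotic sets `D_1, …, D_q`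
(`q ∈ ℕ ∪ {∞}`, indexed by `i : ℕ` with `(i : ℕ∞) < q`), and the weights. -/
structure CondD (k : ℕ) where
  prec : V k → V k → Prop
  ord : IsTransOrder prec
  Lam : ℕ → Finset (V k)
  card_top : Tendsto (fun n => (Lam n).card) atTop atTop
  q : ℕ∞
  D : ℕ → Set (V k)
  D_subset : ∀ i : ℕ, (i : ℕ∞) < q → D i ⊆ {t : V k | prec 0 t}
  D_ne : ∀ i j : ℕ, (i : ℕ∞) < q → (j : ℕ∞) < q → i ≠ j → D i ≠ D j
  lamP : ℕ → ℕ → ℝ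
  lam : ℕ → ℝ
  tendsto_lamP : ∀ i p : ℕ, (i : ℕ∞) < q →
    Tendsto (fun n =>
        (((Lam n).filter fun t => window prec (Lam n : Set (V k)) t p = D i ∩ Kc k p).card : ℝ) /
          ((Lam n).card : ℝ))
      atTop (nhds (lamP i p))
  tendsto_lam : ∀ i : ℕ, (i : ℕ∞) < q → Tendsto (fun p => lamP i p) atTop (nhds (lam i))
  lam_pos : ∀ i : ℕ, (i : ℕ∞) < q → 0 < lam i
  lam_sum : ∑' i : {i : ℕ // (i : ℕ∞) < q}, lam i.1 = 1

lemma Kc_mono {p p' : ℕ} (h : p ≤ p') : Kc k p ⊆ Kc k p' := by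
  intro t ht i
  exact (ht i).trans (by exact_mod_cast h)

lemma mem_Kc_of (t : V k) : ∃ p : ℕ, t ∈ Kc k p := by
  refine ⟨Finset.univ.sup fun i => (t i).natAbs, fun i => ?_⟩
  have h1 : (t i).natAbs ≤ Finset.univ.sup fun i => (t i).natAbs :=
    Finset.le_sup (f := fun i => (t i).natAbs) (Finset.mem_univ i)
  rw [Int.abs_eq_natAbs]
  exact_mod_cast h1

lemma inter_Kc_trunc (D : Set (V k)) {p p' : ℕ} (h : p ≤ p') :
    (D ∩ Kc k p') ∩ Kc k p = D ∩ Kc k p := by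
  ext x
  constructor
  · rintro ⟨⟨h1, _⟩, h2⟩; exact ⟨h1, h2⟩
  · rintro ⟨h1, h2⟩; exact ⟨⟨h1, Kc_mono h h2⟩, h2⟩

lemma window_trunc (prec : V k → V k → Prop) (Λ : Set (V k)) (t : V k) {p p' : ℕ} (h : p ≤ p') :
    window prec Λ t p = window prec Λ t p' ∩ Kc k p := by
  unfold window posPart
  ext x
  simp only [Set.mem_inter_iff, Set.mem_setOf_eq]
  constructor
  · rintro ⟨⟨h1, h2⟩, h3⟩; exact ⟨⟨⟨h1, Kc_mono h h2⟩, h3⟩, h2⟩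
  · rintro ⟨⟨⟨h1, _⟩, h3⟩, h2⟩; exact ⟨⟨h1, h2⟩, h3⟩

lemma sep_persists {D1 D2 : Set (V k)} {p p' : ℕ} (h : p ≤ p')
    (hne : D1 ∩ Kc k p ≠ D2 ∩ Kc k p) : D1 ∩ Kc k p' ≠ D2 ∩ Kc k p' := by
  intro he
  apply hne
  rw [← inter_Kc_trunc D1 h, ← inter_Kc_trunc D2 h, he]

lemma parta (C : CondD k) : ∀ i j : ℕ, (i : ℕ∞) < C.q → (j : ℕ∞) < C.q → i ≠ j →
    ∃ p : ℕ, C.D j ∩ Kc k p ≠ C.D i ∩ Kc k p := by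
  intro i j hi hj hij
  by_contra h
  push_neg at h
  apply C.D_ne j i hj hi (Ne.symm hij)
  ext t
  obtain ⟨p, hp⟩ := mem_Kc_of t
  constructor <;> intro ht
  · have h2 : t ∈ C.D j ∩ Kc k p := ⟨ht, hp⟩
    rw [h p] at h2
    exact h2.1
  · have h2 : t ∈ C.D i ∩ Kc k p := ⟨ht, hp⟩
    rw [← h p] at h2
    exact h2.1

noncomputable def cntF (C : CondD k) (i p n : ℕ) : Finset (V k) :=
  (C.Lam n).filter fun t => window C.prec ((C.Lam n : Set (V k))) t p = C.D i ∩ Kc k p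

lemma tendsto_cntF (C : CondD k) (i p : ℕ) (hi : (i : ℕ∞) < C.q) :
    Tendsto (fun n => ((cntF C i p n).card : ℝ) / ((C.Lam n).card : ℝ)) atTop
      (nhds (C.lamP i p)) :=
  C.tendsto_lamP i p hi

lemma cntF_disjoint (C : CondD k) {i i' : ℕ} (p n : ℕ)
    (h : C.D i ∩ Kc k p ≠ C.D i' ∩ Kc k p) : Disjoint (cntF C i p n) (cntF C i' p n) := by
  rw [Finset.disjoint_left]
  intro t ht ht'
  rw [cntF, Finset.mem_filter] at ht ht'
  exact h (ht.2 ▸ ht'.2)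

lemma sum_lamP_le_one (C : CondD k) (p : ℕ) (R : Finset ℕ)
    (hq : ∀ r ∈ R, (r : ℕ∞) < C.q)
    (hdist : ∀ r ∈ R, ∀ r' ∈ R, r ≠ r' → C.D r ∩ Kc k p ≠ C.D r' ∩ Kc k p) :
    ∑ r ∈ R, C.lamP r p ≤ 1 := by
  have hN : ∀ᶠ n in atTop, (1 : ℕ) ≤ (C.Lam n).card := C.card_top.eventually_ge_atTop 1
  have htend : Tendsto (fun n => ∑ r ∈ R, ((cntF C r p n).card : ℝ) / ((C.Lam n).card : ℝ))
      atTop (nhds (∑ r ∈ R, C.lamP r p)) :=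
    tendsto_finset_sum _ fun r hr => tendsto_cntF C r p (hq r hr)
  refine le_of_tendsto htend ?_
  filter_upwards [hN] with n hn
  have hNpos : (0 : ℝ) < ((C.Lam n).card : ℝ) := by exact_mod_cast hn
  rw [← Finset.sum_div, div_le_one hNpos]
  have hcard : ∑ r ∈ R, (cntF C r p n).card ≤ (C.Lam n).card := by
    rw [← Finset.card_biUnion fun x hx y hy hxy => cntF_disjoint C p n (hdist x hx y hy hxy)]
    exact Finset.card_le_card (Finset.biUnion_subset.mpr fun r _ => Finset.filter_subset _ _)
  exact_mod_cast hcard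

lemma sum_lamP_le_lamP (C : CondD k) {p p' : ℕ} (hpp : p ≤ p') (j : ℕ)
    (hjq : (j : ℕ∞) < C.q) (S : Finset ℕ)
    (hq : ∀ i ∈ S, (i : ℕ∞) < C.q)
    (hclass : ∀ i ∈ S, C.D i ∩ Kc k p = C.D j ∩ Kc k p)
    (hdist : ∀ i ∈ S, ∀ i' ∈ S, i ≠ i' → C.D i ∩ Kc k p' ≠ C.D i' ∩ Kc k p') :
    ∑ i ∈ S, C.lamP i p' ≤ C.lamP j p := by
  have hN : ∀ᶠ n in atTop, (1 : ℕ) ≤ (C.Lam n).card := C.card_top.eventually_ge_atTop 1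
  have htend : Tendsto (fun n => ∑ i ∈ S, ((cntF C i p' n).card : ℝ) / ((C.Lam n).card : ℝ))
      atTop (nhds (∑ i ∈ S, C.lamP i p')) :=
    tendsto_finset_sum _ fun i hi => tendsto_cntF C i p' (hq i hi)
  refine le_of_tendsto_of_tendsto htend (tendsto_cntF C j p hjq) ?_
  filter_upwards [hN] with n hn
  have hNpos : (0 : ℝ) < ((C.Lam n).card : ℝ) := by exact_mod_cast hn
  have hsub : ∀ i ∈ S, cntF C i p' n ⊆ cntF C j p n := by
    intro i hi t ht
    rw [cntF, Finset.mem_filter] at ht ⊢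
    refine ⟨ht.1, ?_⟩
    rw [window_trunc _ _ _ hpp, ht.2, inter_Kc_trunc _ hpp, hclass i hi]
  have hcard : ∑ i ∈ S, (cntF C i p' n).card ≤ (cntF C j p n).card := by
    rw [← Finset.card_biUnion fun x hx y hy hxy => cntF_disjoint C p' n (hdist x hx y hy hxy)]
    exact Finset.card_le_card (Finset.biUnion_subset.mpr hsub)
  rw [← Finset.sum_div]
  gcongr
  exact_mod_cast hcard

lemma exists_sep (C : CondD k) (S : Finset ℕ) (hq : ∀ i ∈ S, (i : ℕ∞) < C.q) :
    ∃ P : ℕ, ∀ p' ≥ P, ∀ i ∈ S, ∀ i' ∈ S, i ≠ i' →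
      C.D i ∩ Kc k p' ≠ C.D i' ∩ Kc k p' := by
  set g : ℕ × ℕ → ℕ := fun x =>
    if h : ∃ p : ℕ, C.D x.1 ∩ Kc k p ≠ C.D x.2 ∩ Kc k p then h.choose else 0 with hg
  refine ⟨(S ×ˢ S).sup g, fun p' hp' i hi i' hi' hne => ?_⟩
  have hex : ∃ p : ℕ, C.D i ∩ Kc k p ≠ C.D i' ∩ Kc k p := by
    obtain ⟨p, hp⟩ := parta C i' i (hq i' hi') (hq i hi) (Ne.symm hne)
    exact ⟨p, hp⟩
  have h1 : g (i, i') = hex.choose := by rw [hg]; exact dif_pos hex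
  have h2 : g (i, i') ≤ (S ×ˢ S).sup g :=
    Finset.le_sup (Finset.mem_product.mpr ⟨hi, hi'⟩)
  exact sep_persists (h1 ▸ h2.trans hp') hex.choose_spec

lemma sum_lam_le_lamP (C : CondD k) (p j : ℕ) (hjq : (j : ℕ∞) < C.q) (S : Finset ℕ)
    (hq : ∀ i ∈ S, (i : ℕ∞) < C.q)
    (hclass : ∀ i ∈ S, C.D i ∩ Kc k p = C.D j ∩ Kc k p) :
    ∑ i ∈ S, C.lam i ≤ C.lamP j p := by
  obtain ⟨P, hP⟩ := exists_sep C S hq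
  have key : ∀ᶠ p' in atTop, ∑ i ∈ S, C.lamP i p' ≤ C.lamP j p := by
    filter_upwards [eventually_ge_atTop (max p P)] with p' hp'
    exact sum_lamP_le_lamP C (le_trans (le_max_left _ _) hp') j hjq S hq hclass
      (hP p' (le_trans (le_max_right _ _) hp'))
  have ht : Tendsto (fun p' => ∑ i ∈ S, C.lamP i p') atTop (nhds (∑ i ∈ S, C.lam i)) :=
    tendsto_finset_sum _ fun i hi => C.tendsto_lam i (hq i hi)
  exact le_of_tendsto ht key

lemma summable_lam (C : CondD k) :
    Summable (fun i : {i : ℕ // (i : ℕ∞) < C.q} => C.lam i.1) := by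
  by_contra h
  have := C.lam_sum
  rw [tsum_eq_zero_of_not_summable h] at this
  norm_num at this

noncomputable def repc (C : CondD k) (j p : ℕ) (F' : Finset ℕ) (A : Set (V k)) : ℕ :=
  if A = C.D j ∩ Kc k p then j
  else if h : ((F'.filter fun m => C.D m ∩ Kc k p = A)).Nonempty
    then (F'.filter fun m => C.D m ∩ Kc k p = A).min' h else 0

noncomputable def rep (C : CondD k) (j p : ℕ) (F' : Finset ℕ) (i : ℕ) : ℕ :=
  repc C j p F' (C.D i ∩ Kc k p)

lemma rep_self (C : CondD k) (j p : ℕ) (F' : Finset ℕ) : rep C j p F' j = j := by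
  unfold rep repc
  rw [if_pos rfl]

lemma rep_congr (C : CondD k) (j p : ℕ) (F' : Finset ℕ) {i i' : ℕ}
    (h : C.D i ∩ Kc k p = C.D i' ∩ Kc k p) : rep C j p F' i = rep C j p F' i' := by
  unfold rep
  rw [h]

lemma rep_class (C : CondD k) (j p : ℕ) (F' : Finset ℕ) {i : ℕ} (hi : i ∈ F') :
    C.D (rep C j p F' i) ∩ Kc k p = C.D i ∩ Kc k p := by
  unfold rep repc
  by_cases h : C.D i ∩ Kc k p = C.D j ∩ Kc k p
  · rw [if_pos h, h]
  · rw [if_neg h]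
    have hne : ((F'.filter fun m => C.D m ∩ Kc k p = C.D i ∩ Kc k p)).Nonempty :=
      ⟨i, Finset.mem_filter.mpr ⟨hi, rfl⟩⟩
    rw [dif_pos hne]
    exact (Finset.mem_filter.mp (Finset.min'_mem _ hne)).2

lemma rep_mem (C : CondD k) (j p : ℕ) (F' : Finset ℕ) {i : ℕ} (hi : i ∈ F') :
    rep C j p F' i = j ∨ rep C j p F' i ∈ F' := by
  unfold rep repc
  by_cases h : C.D i ∩ Kc k p = C.D j ∩ Kc k p
  · rw [if_pos h]
    exact Or.inl rfl
  · rw [if_neg h]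
    have hne : ((F'.filter fun m => C.D m ∩ Kc k p = C.D i ∩ Kc k p)).Nonempty :=
      ⟨i, Finset.mem_filter.mpr ⟨hi, rfl⟩⟩
    rw [dif_pos hne]
    exact Or.inr (Finset.mem_filter.mp (Finset.min'_mem _ hne)).1

/-- Proposition on the basic structure of Condition `(D^Λ)`:
(a) distinct `D_i`, `D_j` are separated by some hypercube `K_p`;
(b) `λ_{j,p} = Σ_{i ∈ I_p^{(j)}} λ_i` where `I_p^{(j)} = {i ≤ q : D_i ∩ K_p = D_j ∩ K_p}`. -/
theorem stmt0 (k : ℕ) (hk : 1 ≤ k) (C : CondD k) :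
    (∀ i j : ℕ, (i : ℕ∞) < C.q → (j : ℕ∞) < C.q → i ≠ j →
      ∃ p : ℕ, C.D j ∩ Kc k p ≠ C.D i ∩ Kc k p) ∧
    (∀ j p : ℕ, (j : ℕ∞) < C.q →
      C.lamP j p =
        ∑' i : {i : ℕ // (i : ℕ∞) < C.q ∧ C.D i ∩ Kc k p = C.D j ∩ Kc k p}, C.lam i.1) := by
  refine ⟨parta C, ?_⟩
  intro j p hjq
  set I : Set ℕ := {i : ℕ | (i : ℕ∞) < C.q ∧ C.D i ∩ Kc k p = C.D j ∩ Kc k p} with hI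
  have hT : (∑' i : {i : ℕ // (i : ℕ∞) < C.q ∧ C.D i ∩ Kc k p = C.D j ∩ Kc k p}, C.lam i.1)
      = ∑' i : ℕ, I.indicator C.lam i := tsum_subtype I C.lam
  rw [hT]
  have hlam_nonneg : ∀ i : ℕ, (i : ℕ∞) < C.q → 0 ≤ C.lam i := fun i hi => (C.lam_pos i hi).le
  have hg_nonneg : ∀ i, 0 ≤ I.indicator C.lam i := by
    intro i
    by_cases h : i ∈ I
    · rw [Set.indicator_of_mem h]
      exact hlam_nonneg i h.1
    · rw [Set.indicator_of_notMem h]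
  have hGsum : Summable (Set.indicator {i : ℕ | (i : ℕ∞) < C.q} C.lam) :=
    summable_subtype_iff_indicator.mp (summable_lam C)
  have hgsum : Summable (I.indicator C.lam) := by
    refine Summable.of_nonneg_of_le hg_nonneg ?_ hGsum
    intro i
    by_cases h : i ∈ I
    · rw [Set.indicator_of_mem h,
        Set.indicator_of_mem (show i ∈ {i : ℕ | (i : ℕ∞) < C.q} from h.1)]
    · rw [Set.indicator_of_notMem h]
      by_cases h2 : i ∈ {i : ℕ | (i : ℕ∞) < C.q}
      · rw [Set.indicator_of_mem h2]
        exact hlam_nonneg i h2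
      · rw [Set.indicator_of_notMem h2]
  have hle : (∑' i : ℕ, I.indicator C.lam i) ≤ C.lamP j p := by
    refine Summable.tsum_le_of_sum_le hgsum fun u => ?_
    have heq : ∑ i ∈ u, I.indicator C.lam i = ∑ i ∈ u.filter fun i => i ∈ I, C.lam i := by
      simpa using Finset.sum_indicator_eq_sum_filter u (fun _ => C.lam) (fun _ => I) id
    rw [heq]
    refine sum_lam_le_lamP C p j hjq _ ?_ ?_
    · intro i hi
      exact ((Finset.mem_filter.mp hi).2 : i ∈ I).1
    · intro i hi
      exact ((Finset.mem_filter.mp hi).2 : i ∈ I).2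
  refine le_antisymm ?_ hle
  by_contra hlt
  push_neg at hlt
  have hε : 0 < C.lamP j p - ∑' i : ℕ, I.indicator C.lam i := sub_pos.mpr hlt
  set ε := C.lamP j p - ∑' i : ℕ, I.indicator C.lam i with hεdef
  have h1 : HasSum (fun i : {i : ℕ // (i : ℕ∞) < C.q} => C.lam i.1) 1 := by
    have h := (summable_lam C).hasSum
    rwa [C.lam_sum] at h
  obtain ⟨F, hF⟩ :=
    (Filter.Tendsto.eventually h1 (eventually_gt_nhds (show 1 - ε < 1 by linarith))).exists
  set F' : Finset ℕ := insert j (F.image fun i => i.1) with hF'def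
  have hF'q : ∀ i ∈ F', (i : ℕ∞) < C.q := by
    intro i hi
    rw [hF'def, Finset.mem_insert] at hi
    rcases hi with rfl | hi
    · exact hjq
    · obtain ⟨a, _, rfl⟩ := Finset.mem_image.mp hi
      exact a.2
  have hjF' : j ∈ F' := Finset.mem_insert_self _ _
  set R : Finset ℕ := F'.image (rep C j p F') with hRdef
  have hjR : j ∈ R := by
    rw [hRdef]
    exact Finset.mem_image.mpr ⟨j, hjF', rep_self C j p F'⟩
  have hrep_q : ∀ i ∈ F', ((rep C j p F' i : ℕ) : ℕ∞) < C.q := by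
    intro i hi
    rcases rep_mem C j p F' hi with h | h
    · rw [h]; exact hjq
    · exact hF'q _ h
  have hRq : ∀ r ∈ R, (r : ℕ∞) < C.q := by
    intro r hr
    obtain ⟨i, hi, rfl⟩ := Finset.mem_image.mp hr
    exact hrep_q i hi
  have hRdist : ∀ r ∈ R, ∀ r' ∈ R, r ≠ r' → C.D r ∩ Kc k p ≠ C.D r' ∩ Kc k p := by
    intro r hr r' hr' hne hcontra
    obtain ⟨i, hi, rfl⟩ := Finset.mem_image.mp hr
    obtain ⟨i', hi', rfl⟩ := Finset.mem_image.mp hr'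
    refine hne (rep_congr C j p F' ?_)
    rw [← rep_class C j p F' hi, ← rep_class C j p F' hi', hcontra]
  have hmain : ∑ r ∈ R, C.lamP r p ≤ 1 := sum_lamP_le_one C p R hRq hRdist
  have hmapsto : ∀ i ∈ F', rep C j p F' i ∈ R := fun i hi => Finset.mem_image_of_mem _ hi
  have hpart : ∑ r ∈ R, ∑ i ∈ F'.filter fun i => rep C j p F' i = r, C.lam i
      = ∑ i ∈ F', C.lam i :=
    Finset.sum_fiberwise_of_maps_to hmapsto _
  have hfib : ∀ r ∈ R,
      (∑ i ∈ F'.filter fun i => rep C j p F' i = r, C.lam i) ≤ C.lamP r p := by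
    intro r hr
    refine sum_lam_le_lamP C p r (hRq r hr) _ ?_ ?_
    · intro i hi
      exact hF'q i (Finset.mem_filter.mp hi).1
    · intro i hi
      obtain ⟨hiF, hri⟩ := Finset.mem_filter.mp hi
      rw [← hri, rep_class C j p F' hiF]
  have hfibj : (∑ i ∈ F'.filter fun i => rep C j p F' i = j, C.lam i)
      ≤ ∑' i : ℕ, I.indicator C.lam i := by
    have heq : ∀ i ∈ (F'.filter fun i => rep C j p F' i = j), C.lam i = I.indicator C.lam i := by
      intro i hi
      obtain ⟨hiF, hri⟩ := Finset.mem_filter.mp hi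
      have hiI : i ∈ I := by
        refine ⟨hF'q i hiF, ?_⟩
        rw [← rep_class C j p F' hiF, hri]
      rw [Set.indicator_of_mem hiI]
    rw [Finset.sum_congr rfl heq]
    exact Summable.sum_le_tsum _ (fun i _ => hg_nonneg i) hgsum
  have hsplit : (∑ r ∈ R.erase j, C.lamP r p) + C.lamP j p = ∑ r ∈ R, C.lamP r p :=
    Finset.sum_erase_add R _ hjR
  have hsplit2 : (∑ r ∈ R.erase j, ∑ i ∈ F'.filter fun i => rep C j p F' i = r, C.lam i)
      + (∑ i ∈ F'.filter fun i => rep C j p F' i = j, C.lam i) = ∑ i ∈ F', C.lam i := by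
    rw [Finset.sum_erase_add R _ hjR]
    exact hpart
  have h2 : (∑ r ∈ R.erase j, ∑ i ∈ F'.filter fun i => rep C j p F' i = r, C.lam i)
      ≤ ∑ r ∈ R.erase j, C.lamP r p :=
    Finset.sum_le_sum fun r hr => hfib r (Finset.mem_of_mem_erase hr)
  have hF'sum : 1 - ε < ∑ i ∈ F', C.lam i := by
    calc 1 - ε < ∑ i ∈ F, C.lam i.1 := hF
      _ = ∑ i ∈ F.image (fun i => i.1), C.lam i :=
        (Finset.sum_image (by intro x _ y _ h; exact Subtype.ext h)).symm
      _ ≤ ∑ i ∈ F', C.lam i := by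
        refine Finset.sum_le_sum_of_subset_of_nonneg ?_ fun i hi _ => hlam_nonneg i (hF'q i hi)
        intro x hx
        exact Finset.mem_insert_of_mem hx
  have hlamPj : C.lamP j p = (∑' i : ℕ, I.indicator C.lam i) + ε := by
    rw [hεdef]; ring
  linarith [hmain, hsplit, hsplit2, h2, hfibj, hF'sum, hlamPj]


end Paper
end

section
/- Suppose (Λ_n) satisfies Condition (D^Λ). Then for every j ≤ q and every z ∈ D_j there exists i ≤ q such that D_i = ((D_j)_{−z})⁺ and λ_i ≥ λ_j. Consequently, setting 𝓖_j := {z ∈ D_j ∪ {0} : ((D_j)_{−z})⁺ = D_j}, the collection of distinct sets of the form ((D_j)_{−z})⁺ with z ∈ D_j \ 𝓖_j is finite, its cardinality b_j satisfies b_j ≤ ⌊1/λ_j⌋ − 1, and each of its members equals some D_l with λ_l ≥ λ_j. -/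
open scoped Classical Pointwise
open Filter Set

namespace Paper

variable {k : ℕ}

/-- `((A)_{-z})⁺`, the shifted positive part of `A`. -/
def shiftPos (prec : V k → V k → Prop) (A : Set (V k)) (z : V k) : Set (V k) :=
  posPart prec (tr A (-z))

/-- `𝓖(A) = {z ∈ A ∪ {0} : ((A)_{-z})⁺ = A}`. -/
def Gset (prec : V k → V k → Prop) (A : Set (V k)) : Set (V k) :=
  {z ∈ insert (0 : V k) A | shiftPos prec A z = A}

/-!
If the `p'`-window of `Λ_n` at `t` is `D_j ∩ K_{p'}` and `z ∈ D_j ∩ K_c` with `p + c ≤ p'`, then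
`t + z ∈ Λ_n` and its `p`-window is `((D_j)_{-z})⁺ ∩ K_p`. Hence the pattern `((D_j)_{-z})⁺` occurs
with frequency at least `λ_j`. Distinct patterns occur at disjoint sets of points and the `λ_i`
already exhaust the total mass `1`, so `((D_j)_{-z})⁺` is some `D_i`, and then `λ_i ≥ λ_j`.
At most `⌊1/λ_j⌋` indices have `λ_i ≥ λ_j`, one of them being `j` itself, whence the bound on `b_j`.
-/

lemma _root_.Summable.finite_setOf_le {ι : Type*} {f : ι → ℝ} (hf : Summable f) {a : ℝ}
    (ha : 0 < a) : {i | a ≤ f i}.Finite := by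
  simpa only [not_lt] using Filter.eventually_cofinite.1
    (hf.tendsto_cofinite_zero.eventually (gt_mem_nhds ha))

lemma _root_.Summable.ncard_setOf_le_le {ι : Type*} {f : ι → ℝ} (hf : Summable f)
    (h0 : ∀ i, 0 ≤ f i) {a : ℝ} (ha : 0 < a) : {i | a ≤ f i}.ncard ≤ ⌊(∑' i, f i) / a⌋₊ := by
  have hfin := hf.finite_setOf_le ha
  rw [Set.ncard_eq_toFinset_card _ hfin]
  refine Nat.le_floor ((le_div_iff₀ ha).2 ?_)
  calc (hfin.toFinset.card : ℝ) * a = ∑ _i ∈ hfin.toFinset, a := by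
        rw [Finset.sum_const, nsmul_eq_mul]
    _ ≤ ∑ i ∈ hfin.toFinset, f i := Finset.sum_le_sum fun i hi => hfin.mem_toFinset.1 hi
    _ ≤ ∑' i, f i := hf.sum_le_tsum _ fun i _ => h0 i

lemma mem_tr {A : Set (V k)} {u s : V k} : s ∈ tr A u ↔ s - u ∈ A := by
  constructor
  · rintro ⟨a, ha, rfl⟩
    simpa using ha
  · exact fun h => ⟨s - u, h, sub_add_cancel s u⟩

lemma exists_mem_Kc (z : V k) : ∃ c : ℕ, z ∈ Kc k c :=
  ⟨Finset.univ.sup fun i => (z i).natAbs, fun i => by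
    rw [Int.abs_eq_natAbs]
    exact_mod_cast Finset.le_sup (f := fun i => (z i).natAbs) (Finset.mem_univ i)⟩

lemma add_mem_Kc {s z : V k} {p c : ℕ} (hs : s ∈ Kc k p) (hz : z ∈ Kc k c) :
    s + z ∈ Kc k (p + c) := fun i => by
  push_cast
  exact (abs_add_le _ _).trans (add_le_add (hs i) (hz i))

lemma eventually_inter_Kc_ne {A B : Set (V k)} (h : A ≠ B) :
    ∀ᶠ p in atTop, A ∩ Kc k p ≠ B ∩ Kc k p := by
  obtain ⟨x, hx⟩ := not_forall.1 (mt Set.ext h)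
  obtain ⟨c, hxc⟩ := exists_mem_Kc x
  filter_upwards [eventually_ge_atTop c] with p hp heq
  have := Set.ext_iff.1 heq x
  simp only [mem_inter_iff, Kc_mono hp hxc, and_true] at this
  exact hx this

lemma eventually_injOn_inter_Kc (𝒜 : Finset (Set (V k))) :
    ∀ᶠ p in atTop, InjOn (· ∩ Kc k p) 𝒜 := by
  have : ∀ A ∈ 𝒜, ∀ B ∈ 𝒜, ∀ᶠ p in atTop, A ∩ Kc k p = B ∩ Kc k p → A = B := fun A _ B _ => by
    by_cases hAB : A = B
    · exact Eventually.of_forall fun _ _ => hAB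
    · exact (eventually_inter_Kc_ne hAB).mono fun _ hp heq => absurd heq hp
  filter_upwards [(eventually_all_finset 𝒜).2 fun A hA => (eventually_all_finset 𝒜).2 (this A hA)]
    with p hp A hA B hB using hp A hA B hB

lemma IsTransOrder.pos_add {prec : V k → V k → Prop} (ord : IsTransOrder prec) {a b : V k}
    (ha : prec 0 a) (hb : prec 0 b) : prec 0 (a + b) :=
  ord.trans ha (by simpa [add_comm] using ord.invariant 0 b a hb)

lemma window_add_eq_shiftPos {prec : V k → V k → Prop} (ord : IsTransOrder prec)
    {Λ D : Set (V k)} (hD : D ⊆ {t | prec 0 t}) {z : V k} (hz : z ∈ D) {c p p' : ℕ}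
    (hzc : z ∈ Kc k c) (hp : p + c ≤ p') {t : V k} (ht : window prec Λ t p' = D ∩ Kc k p') :
    t + z ∈ Λ ∧ window prec Λ (t + z) p = shiftPos prec D z ∩ Kc k p := by
  have hmem : ∀ s, (s + t ∈ Λ ∧ s ∈ Kc k p') ∧ prec 0 s ↔ s ∈ D ∧ s ∈ Kc k p' := fun s => by
    simpa only [window, posPart, mem_inter_iff, mem_ofPred_eq, mem_tr, sub_neg_eq_add]
      using Set.ext_iff.1 ht s
  have hzK : z ∈ Kc k p' := Kc_mono (by omega) hzc
  have hshift : ∀ s ∈ Kc k p, prec 0 s → (s + (t + z) ∈ Λ ↔ s + z ∈ D) := fun s hs hs0 => by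
    have := hmem (s + z)
    rw [add_right_comm] at this
    simp only [Kc_mono hp (add_mem_Kc hs hzc), ord.pos_add hs0 (hD hz), and_true] at this
    rwa [← add_assoc]
  refine ⟨by simpa [add_comm] using ((hmem z).2 ⟨hz, hzK⟩).1.1, ?_⟩
  ext s
  simp only [window, shiftPos, posPart, mem_inter_iff, mem_ofPred_eq, mem_tr, sub_neg_eq_add]
  constructor
  · rintro ⟨⟨hsΛ, hsK⟩, hs0⟩
    exact ⟨⟨(hshift s hsK hs0).1 hsΛ, hs0⟩, hsK⟩
  · rintro ⟨⟨hsD, hs0⟩, hsK⟩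
    exact ⟨⟨(hshift s hsK hs0).2 hsD, hsK⟩, hs0⟩

/-- `windowFreq prec (Λ_n) p (D_i)` is the ratio whose limit as `n → ∞` is `λ_{i,p}`. -/
noncomputable def windowFreq (prec : V k → V k → Prop) (Λ : Finset (V k)) (p : ℕ)
    (A : Set (V k)) : ℝ :=
  ((Λ.filter fun t => window prec (Λ : Set (V k)) t p = A ∩ Kc k p).card : ℝ) / (Λ.card : ℝ)

lemma windowFreq_le_windowFreq_shiftPos {prec : V k → V k → Prop} (ord : IsTransOrder prec)
    {D : Set (V k)} (hD : D ⊆ {t | prec 0 t}) {z : V k} (hz : z ∈ D) {c p p' : ℕ}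
    (hzc : z ∈ Kc k c) (hp : p + c ≤ p') (Λ : Finset (V k)) :
    windowFreq prec Λ p' D ≤ windowFreq prec Λ p (shiftPos prec D z) := by
  refine div_le_div_of_nonneg_right ?_ (Nat.cast_nonneg _)
  refine Nat.cast_le.2 (Finset.card_le_card_of_injOn (· + z) (fun t ht => ?_)
    (fun _ _ _ _ h => add_right_cancel h))
  simp only [Finset.coe_filter, mem_ofPred_eq] at ht ⊢
  obtain ⟨htz, hw⟩ := window_add_eq_shiftPos ord hD hz hzc hp ht.2
  exact ⟨Finset.mem_coe.1 htz, hw⟩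

lemma sum_windowFreq_le_one (prec : V k → V k → Prop) (Λ : Finset (V k)) {p : ℕ}
    {𝒜 : Finset (Set (V k))} (h𝒜 : InjOn (· ∩ Kc k p) 𝒜) :
    ∑ A ∈ 𝒜, windowFreq prec Λ p A ≤ 1 := by
  simp only [windowFreq, ← Finset.sum_div]
  apply div_le_one_of_le₀ _ (Nat.cast_nonneg _)
  rw [← Finset.sum_image (f := fun B => ((Λ.filter fun t => window prec Λ t p = B).card : ℝ)) h𝒜]
  exact_mod_cast (Finset.sum_card_fiberwise_eq_card_filter _ _ _).le.trans
    (Finset.card_filter_le _ _)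

namespace CondD

variable (C : CondD k)

lemma summable_lam : Summable fun i : {i : ℕ // (i : ℕ∞) < C.q} => C.lam i.1 := by
  by_contra h
  simpa [tsum_eq_zero_of_not_summable h] using C.lam_sum

lemma lam_le_of_lamP_le {j : ℕ} (hj : (j : ℕ∞) < C.q) {c : ℕ} {x : ℝ}
    (h : ∀ p' ≥ c, C.lamP j p' ≤ x) : C.lam j ≤ x :=
  le_of_tendsto (C.tendsto_lam j hj) (eventually_atTop.2 ⟨c, h⟩)

lemma lam_le_of_windowFreq_le {i j : ℕ} (hi : (i : ℕ∞) < C.q) (hj : (j : ℕ∞) < C.q) {c : ℕ}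
    (h : ∀ p p', p + c ≤ p' → ∀ n,
      windowFreq C.prec (C.Lam n) p' (C.D j) ≤ windowFreq C.prec (C.Lam n) p (C.D i)) :
    C.lam j ≤ C.lam i := by
  refine ge_of_tendsto (C.tendsto_lam i hi) (Eventually.of_forall fun p => ?_)
  exact C.lam_le_of_lamP_le hj fun p' hp' => le_of_tendsto_of_tendsto
    (C.tendsto_lamP j p' hj) (C.tendsto_lamP i p hi) (Eventually.of_forall (h p p' hp'))

lemma exists_D_eq_of_windowFreq_le {j : ℕ} (hj : (j : ℕ∞) < C.q) {B : Set (V k)} {c : ℕ}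
    (h : ∀ p p', p + c ≤ p' → ∀ n,
      windowFreq C.prec (C.Lam n) p' (C.D j) ≤ windowFreq C.prec (C.Lam n) p B) :
    ∃ i : ℕ, (i : ℕ∞) < C.q ∧ C.D i = B := by
  by_contra! hB
  suffices hF : ∀ F : Finset {i : ℕ // (i : ℕ∞) < C.q}, C.lam j + ∑ i ∈ F, C.lam i.1 ≤ 1 by
    have := Real.tsum_le_of_sum_le (fun i => (C.lam_pos i.1 i.2).le)
      (fun F => le_sub_iff_add_le'.2 (hF F))
    linarith [C.lam_sum, C.lam_pos j hj]
  intro F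
  have hinj : InjOn (fun i : {i : ℕ // (i : ℕ∞) < C.q} => C.D i.1) F :=
    fun a _ b _ hab => Subtype.ext (by_contra fun hne => C.D_ne a.1 b.1 a.2 b.2 hne hab)
  have hBF : B ∉ F.image fun i => C.D i.1 := by
    simp only [Finset.mem_image, not_exists, not_and]
    exact fun i _ => hB i.1 i.2
  have hlamP : ∀ᶠ p in atTop, ∀ p' ≥ p + c, C.lamP j p' + ∑ i ∈ F, C.lamP i.1 p ≤ 1 := by
    filter_upwards [eventually_injOn_inter_Kc (insert B (F.image fun i => C.D i.1))]
      with p hp p' hp'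
    refine le_of_tendsto' ((C.tendsto_lamP j p' hj).add
      (tendsto_finsetSum F fun i _ => C.tendsto_lamP i.1 p i.2)) fun n => ?_
    calc windowFreq C.prec (C.Lam n) p' (C.D j)
          + ∑ i ∈ F, windowFreq C.prec (C.Lam n) p (C.D i.1)
        ≤ windowFreq C.prec (C.Lam n) p B
          + ∑ i ∈ F, windowFreq C.prec (C.Lam n) p (C.D i.1) := by
          gcongr
          exact h p p' hp' n
      _ = ∑ A ∈ insert B (F.image fun i => C.D i.1), windowFreq C.prec (C.Lam n) p A := by
        rw [Finset.sum_insert hBF, Finset.sum_image hinj]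
      _ ≤ 1 := sum_windowFreq_le_one _ _ hp
  refine le_of_tendsto (tendsto_const_nhds.add
    (tendsto_finsetSum F fun i _ => C.tendsto_lam i.1 i.2)) (hlamP.mono fun p hp => ?_)
  linarith [C.lam_le_of_lamP_le hj (c := p + c) fun p' hp' => le_sub_iff_add_le.2 (hp p' hp')]

theorem exists_D_eq_shiftPos {j : ℕ} (hj : (j : ℕ∞) < C.q) {z : V k} (hz : z ∈ C.D j) :
    ∃ i : ℕ, (i : ℕ∞) < C.q ∧ C.D i = shiftPos C.prec (C.D j) z ∧ C.lam j ≤ C.lam i := by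
  obtain ⟨c, hzc⟩ := exists_mem_Kc z
  have hfreq := fun p p' (hp : p + c ≤ p') n =>
    windowFreq_le_windowFreq_shiftPos C.ord (C.D_subset j hj) hz hzc hp (C.Lam n)
  obtain ⟨i, hi, hDi⟩ := C.exists_D_eq_of_windowFreq_le hj hfreq
  exact ⟨i, hi, hDi, C.lam_le_of_windowFreq_le hi hj (hDi ▸ hfreq)⟩

end CondD

theorem stmt1_general (k : ℕ) (C : CondD k) :
    ∀ j : ℕ, (j : ℕ∞) < C.q →
      (∀ z ∈ C.D j, ∃ i : ℕ, (i : ℕ∞) < C.q ∧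
          C.D i = shiftPos C.prec (C.D j) z ∧ C.lam j ≤ C.lam i) ∧
      ({A : Set (V k) | ∃ z ∈ C.D j \ Gset C.prec (C.D j), A = shiftPos C.prec (C.D j) z}.Finite ∧
        {A : Set (V k) |
            ∃ z ∈ C.D j \ Gset C.prec (C.D j), A = shiftPos C.prec (C.D j) z}.ncard ≤
          Nat.floor (1 / C.lam j) - 1 ∧
        ∀ A ∈ {A : Set (V k) | ∃ z ∈ C.D j \ Gset C.prec (C.D j),
            A = shiftPos C.prec (C.D j) z},
          ∃ l : ℕ, (l : ℕ∞) < C.q ∧ C.D l = A ∧ C.lam j ≤ C.lam l) := by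
  intro j hj
  set S := {A : Set (V k) | ∃ z ∈ C.D j \ Gset C.prec (C.D j), A = shiftPos C.prec (C.D j) z}
  set I := {i : {i : ℕ // (i : ℕ∞) < C.q} | C.lam j ≤ C.lam i.1}
  have hI : I.Finite := C.summable_lam.finite_setOf_le (C.lam_pos j hj)
  have hIcard : I.ncard ≤ ⌊1 / C.lam j⌋₊ := by
    simpa only [C.lam_sum] using
      C.summable_lam.ncard_setOf_le_le (fun i => (C.lam_pos i.1 i.2).le) (C.lam_pos j hj)
  have hSI : S ⊆ (fun i => C.D i.1) '' I \ {C.D j} := by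
    rintro _ ⟨z, ⟨hz, hzG⟩, rfl⟩
    obtain ⟨i, hi, hDi, hle⟩ := C.exists_D_eq_shiftPos hj hz
    exact ⟨⟨⟨i, hi⟩, hle, hDi⟩, fun h => hzG ⟨mem_insert_of_mem _ hz, h⟩⟩
  have hDj : C.D j ∈ (fun i => C.D i.1) '' I :=
    ⟨⟨j, hj⟩, show C.lam j ≤ C.lam j from le_rfl, rfl⟩
  refine ⟨fun z hz => C.exists_D_eq_shiftPos hj hz, (hI.image _).sdiff.subset hSI, ?_,
    fun _ ⟨z, ⟨hz, _⟩, hA⟩ => hA ▸ C.exists_D_eq_shiftPos hj hz⟩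
  calc S.ncard ≤ ((fun i => C.D i.1) '' I \ {C.D j}).ncard :=
        Set.ncard_le_ncard hSI (hI.image _).sdiff
    _ = ((fun i => C.D i.1) '' I).ncard - 1 := Set.ncard_sdiff_singleton_of_mem hDj
    _ ≤ I.ncard - 1 := Nat.sub_le_sub_right (Set.ncard_image_le hI) 1
    _ ≤ ⌊1 / C.lam j⌋₊ - 1 := Nat.sub_le_sub_right hIcard 1

/-- translated copies of the `D_j`'s:
for every `j ≤ q` and `z ∈ D_j` there is `i ≤ q` with `D_i = ((D_j)_{-z})⁺` and `λ_i ≥ λ_j`;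
moreover the collection of distinct sets `((D_j)_{-z})⁺`, `z ∈ D_j \ 𝓖_j`, is finite, its
cardinality is at most `⌊1/λ_j⌋ - 1`, and each of its members is some `D_l` with `λ_l ≥ λ_j`. -/
theorem stmt1 (k : ℕ) (hk : 1 ≤ k) (C : CondD k) :
    ∀ j : ℕ, (j : ℕ∞) < C.q →
      (∀ z ∈ C.D j, ∃ i : ℕ, (i : ℕ∞) < C.q ∧
          C.D i = shiftPos C.prec (C.D j) z ∧ C.lam j ≤ C.lam i) ∧
      ({A : Set (V k) | ∃ z ∈ C.D j \ Gset C.prec (C.D j), A = shiftPos C.prec (C.D j) z}.Finite ∧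
        {A : Set (V k) |
            ∃ z ∈ C.D j \ Gset C.prec (C.D j), A = shiftPos C.prec (C.D j) z}.ncard ≤
          Nat.floor (1 / C.lam j) - 1 ∧
        ∀ A ∈ {A : Set (V k) | ∃ z ∈ C.D j \ Gset C.prec (C.D j),
            A = shiftPos C.prec (C.D j) z},
          ∃ l : ℕ, (l : ℕ∞) < C.q ∧ C.D l = A ∧ C.lam j ≤ C.lam l) :=
  stmt1_general k C

end Paper
end
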